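/- arXiv:math/0010045 — 5 statements merged into one kernel-verified Lean document; each statement's English description precedes it below -/
import Mathlib

section
/- Let p_1, p_2 be polynomials in N variables with integer coefficients. Then ht(p_1 · p_2) ≤ ht(p_1) + ht(p_2) + min(deg p_1, deg p_2) · ln(N+1), where ht is the logarithmic height and deg the total degree. -/
/-!
Write `H(p)` for the largest absolute value of a coefficient of `p`. Each coefficient of
`p₁ p₂` is a sum of at most `#supp p₁` products of a coefficient of `p₁` and one of `p₂`, so
`H(p₁ p₂) ≤ #supp p₁ · H(p₁) H(p₂)`, and symmetrically with `p₂`. A monomial of degree at most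
`d` in `N` variables, padded with a dummy variable, is a multiset of size `d` over `N + 1`
symbols, so `#supp p ≤ (N + 1)^deg p`. Taking logarithms of
`1 + H(p₁ p₂) ≤ (N + 1)^d (1 + H(p₁)) (1 + H(p₂))` gives the bound.
-/

open MvPolynomial Finset

theorem Sym.card_le_card_pow (α : Type*) [Fintype α] [DecidableEq α] (n : ℕ) :
    Fintype.card (Sym α n) ≤ Fintype.card α ^ n := by
  rw [← card_vector]
  refine Fintype.card_le_of_surjective Sym.ofVector fun ⟨s, hs⟩ => ?_
  induction s using Quotient.inductionOn with
  | h l => exact ⟨⟨l, hs⟩, rfl⟩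

theorem Multiset.card_finset_le_pow_of_card_le {α : Type*} [Fintype α] {d : ℕ}
    (s : Finset (Multiset α)) (h : ∀ x ∈ s, Multiset.card x ≤ d) :
    #s ≤ (Fintype.card α + 1) ^ d := by
  classical
  let pad : s → Sym (Option α) d := fun x =>
    ⟨(x : Multiset α).map some + .replicate (d - Multiset.card (x : Multiset α)) none, by
      simp only [Multiset.card_add, Multiset.card_map, Multiset.card_replicate]
      have := h x x.2
      omega⟩
  have hpad : Function.Injective pad := by
    intro x y hxy
    refine Subtype.ext (Multiset.ext.2 fun a => ?_)
    have hcount :=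
      congrArg (fun z : Sym (Option α) d => (z : Multiset (Option α)).count (some a)) hxy
    simpa [pad, Multiset.count_replicate,
      Multiset.count_map_eq_count' _ _ (Option.some_injective α)] using hcount
  calc #s = Fintype.card s := (Fintype.card_coe s).symm
    _ ≤ Fintype.card (Sym (Option α) d) := Fintype.card_le_of_injective pad hpad
    _ ≤ (Fintype.card α + 1) ^ d := by simpa using Sym.card_le_card_pow (Option α) d

theorem Real.log_one_add_le_of_le_mul {a b c k : ℝ} (ha : 0 ≤ a) (hb : 0 ≤ b) (hc : 0 ≤ c)
    (hk : 1 ≤ k) (h : a ≤ k * (b * c)) :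
    Real.log (1 + a) ≤ Real.log (1 + b) + Real.log (1 + c) + Real.log k := by
  rw [← Real.log_mul (by positivity) (by positivity),
    ← Real.log_mul (by positivity) (by positivity)]
  refine Real.log_le_log (by positivity) ?_
  nlinarith [mul_nonneg hb hc]

namespace MvPolynomial

variable {σ : Type*}

theorem card_support_le_pow_totalDegree {R : Type*} [CommSemiring R] [Fintype σ]
    (p : MvPolynomial σ R) : #p.support ≤ (Fintype.card σ + 1) ^ p.totalDegree := by
  classical
  rw [← card_image_of_injective _ Multiset.toFinsupp.symm.injective]
  refine Multiset.card_finset_le_pow_of_card_le _ fun x hx => ?_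
  obtain ⟨m, hm, rfl⟩ := mem_image.1 hx
  rw [totalDegree_eq]
  exact le_sup (f := fun m => Multiset.card (Finsupp.toMultiset m)) hm

def maxCoeffNatAbs (p : MvPolynomial σ ℤ) : ℕ :=
  p.support.sup fun m => (p.coeff m).natAbs

theorem natAbs_coeff_le_maxCoeffNatAbs (p : MvPolynomial σ ℤ) (m : σ →₀ ℕ) :
    (p.coeff m).natAbs ≤ maxCoeffNatAbs p := by
  by_cases hm : m ∈ p.support
  · exact le_sup (f := fun m => (p.coeff m).natAbs) hm
  · simp [notMem_support_iff.1 hm]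

theorem maxCoeffNatAbs_mul_le (p q : MvPolynomial σ ℤ) :
    maxCoeffNatAbs (p * q) ≤ #p.support * (maxCoeffNatAbs p * maxCoeffNatAbs q) := by
  classical
  refine Finset.sup_le fun m _ => ?_
  have hterm (a : σ →₀ ℕ) : (coeff m (monomial a (p.coeff a) * q)).natAbs ≤
      maxCoeffNatAbs p * maxCoeffNatAbs q := by
    rw [coeff_monomial_mul']
    split_ifs
    · rw [Int.natAbs_mul]
      exact Nat.mul_le_mul (natAbs_coeff_le_maxCoeffNatAbs p a)
        (natAbs_coeff_le_maxCoeffNatAbs q _)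
    · simp
  calc ((p * q).coeff m).natAbs
      = (∑ a ∈ p.support, coeff m (monomial a (p.coeff a) * q)).natAbs := by
        conv_lhs => rw [p.as_sum, sum_mul, coeff_sum]
    _ ≤ ∑ a ∈ p.support, (coeff m (monomial a (p.coeff a) * q)).natAbs :=
        Int.natAbs_sum_le _ _
    _ ≤ #p.support * (maxCoeffNatAbs p * maxCoeffNatAbs q) :=
        sum_le_card_nsmul _ _ _ fun a _ => hterm a

theorem maxCoeffNatAbs_mul_le_pow_min [Fintype σ] (p q : MvPolynomial σ ℤ) :
    maxCoeffNatAbs (p * q) ≤ (Fintype.card σ + 1) ^ min p.totalDegree q.totalDegree *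
      (maxCoeffNatAbs p * maxCoeffNatAbs q) := by
  rcases le_total p.totalDegree q.totalDegree with h | h
  · rw [min_eq_left h]
    exact (maxCoeffNatAbs_mul_le p q).trans
      (Nat.mul_le_mul_right _ (card_support_le_pow_totalDegree p))
  · rw [min_eq_right h, mul_comm p, mul_comm (maxCoeffNatAbs p)]
    exact (maxCoeffNatAbs_mul_le q p).trans
      (Nat.mul_le_mul_right _ (card_support_le_pow_totalDegree q))

end MvPolynomial

/-- Logarithmic height of a multivariate polynomial with integer coefficients:
`ln (1 + max |coefficients|)`. -/
noncomputable def polyHeight {N : ℕ} (p : MvPolynomial (Fin N) ℤ) : ℝ :=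
  Real.log (1 + (p.support.sup fun m => (p.coeff m).natAbs : ℕ))

/-- `ht (p₁ p₂) ≤ ht p₁ + ht p₂ + min (deg p₁) (deg p₂) · ln (N + 1)` for
polynomials in `N` variables over `ℤ`. -/
theorem height_mul_le {N : ℕ} (p₁ p₂ : MvPolynomial (Fin N) ℤ) :
    polyHeight (p₁ * p₂) ≤
      polyHeight p₁ + polyHeight p₂ +
        (min p₁.totalDegree p₂.totalDegree : ℕ) * Real.log (N + 1) := by
  have hcoeff := maxCoeffNatAbs_mul_le_pow_min p₁ p₂
  rw [Fintype.card_fin] at hcoeff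
  have hpow : (1 : ℝ) ≤ ((N : ℝ) + 1) ^ min p₁.totalDegree p₂.totalDegree :=
    one_le_pow₀ (by simp)
  rw [← Real.log_pow]
  exact Real.log_one_add_le_of_le_mul (by positivity) (by positivity) (by positivity) hpow
    (by exact_mod_cast hcoeff)
end

section
/- (Schwartz–Zippel) Let q be a nonzero polynomial in s variables over a field (or over ℤ) of total degree at most D, and let Ω be a finite set of elements of the field with |Ω| elements. Then the number of points in Ω^s at which q vanishes is at most D·|Ω|^{s-1}; equivalently, a uniformly random point of Ω^s is a zero of q with probability at most D/|Ω|. -/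
open MvPolynomial Finset Fintype

namespace MvPolynomial

theorem eval_ne_zero_of_isEmpty {R σ : Type*} [CommSemiring R] [IsEmpty σ]
    {p : MvPolynomial σ R} (hp : p ≠ 0) (x : σ → R) : eval x p ≠ 0 := by
  obtain ⟨a, rfl⟩ := C_surjective σ p
  simpa using hp

theorem card_zeros_piFinset_le {R : Type*} [CommRing R] [IsDomain R] [DecidableEq R] {n : ℕ}
    {p : MvPolynomial (Fin (n + 1)) R} (hp : p ≠ 0) (S : Finset R) :
    #{x ∈ piFinset fun _ ↦ S | eval x p = 0} ≤ p.totalDegree * #S ^ n := by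
  obtain rfl | hS := S.eq_empty_or_nonempty
  · simp
  have hS_pos : (0 : ℚ≥0) < #S := by exact_mod_cast hS.card_pos
  have h := schwartz_zippel_totalDegree hp S
  rw [div_le_div_iff₀ (by positivity) hS_pos, pow_succ, ← mul_assoc] at h
  exact_mod_cast le_of_mul_le_mul_right h hS_pos

end MvPolynomial

/-- **Schwartz–Zippel.** A nonzero polynomial `q` in `s` variables over a field,
of total degree at most `D`, has at most `D · |Ω|^(s-1)` zeros in `Ω^s` for any
finite set `Ω` of the field; equivalently, a uniformly random point of `Ω^s` is
a zero of `q` with probability at most `D / |Ω|`. -/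
theorem schwartz_zippel {k : Type*} [Field k] [DecidableEq k] {s : ℕ} {q : MvPolynomial (Fin s) k}
    (hq : q ≠ 0) {D : ℕ} (hD : q.totalDegree ≤ D) (Ω : Finset k) :
    ((Fintype.piFinset fun _ : Fin s => Ω).filter fun x => eval x q = 0).card ≤
      D * Ω.card ^ (s - 1) := by
  cases s with
  | zero => simp [eval_ne_zero_of_isEmpty hq]
  | succ m => exact (card_zeros_piFinset_le hq Ω).trans (Nat.mul_le_mul_right _ hD)
end

section
/- Let S ⊆ T be a finitely generated field extension in characteristic zero. Then the transcendence degree of T over S equals the dimension of the T-vector space Ω_{T/S} of Kähler differentials. -/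
universe u v

/-!
Let `x` be a transcendence basis and send `X i ↦ x i`. The map `MvPolynomial ι S → S(x)` is a
localization and `S(x) → T` is separable algebraic (characteristic zero), so
`MvPolynomial ι S → T` is formally étale. Hence `Ω[T⁄S] ≅ T ⊗ Ω[MvPolynomial ι S⁄S]`, which is
free on the `dX i`.
-/

open MvPolynomial KaehlerDifferential

theorem KaehlerDifferential.lift_mk_eq_lift_rank_of_formallyEtale_mvPolynomial {ι : Type v}
    (S : Type*) (T : Type u) [CommRing S] [CommRing T] [Nontrivial T] [Algebra S T]
    [Algebra (MvPolynomial ι S) T] [IsScalarTower S (MvPolynomial ι S) T]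
    [Algebra.FormallyEtale (MvPolynomial ι S) T] :
    Cardinal.lift.{u} (Cardinal.mk ι) = Cardinal.lift.{v} (Module.rank T Ω[T⁄S]) :=
  (((mvPolynomialBasis S ι).baseChange T).map
    (tensorKaehlerEquivOfFormallyEtale S (MvPolynomial ι S) T)).mk_eq_rank

theorem Algebra.FormallyEtale.mvPolynomial_of_isTranscendenceBasis {ι : Type*}
    {S T : Type*} [Field S] [Field T] [Algebra S T]
    [Algebra (MvPolynomial ι S) T] [IsScalarTower S (MvPolynomial ι S) T]
    {x : ι → T} (hx : IsTranscendenceBasis S x)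
    (hX : ∀ i, algebraMap (MvPolynomial ι S) T (X i) = x i)
    [Algebra.IsSeparable (IntermediateField.adjoin S (Set.range x)) T] :
    Algebra.FormallyEtale (MvPolynomial ι S) T := by
  set F := IntermediateField.adjoin S (Set.range x)
  have hx' : aeval x = IsScalarTower.toAlgHom S (MvPolynomial ι S) T := algHom_ext fun i ↦ by
    simp [hX]
  let toF : MvPolynomial ι S →ₐ[S] F :=
    aeval fun i ↦ ⟨x i, IntermediateField.subset_adjoin S _ (Set.mem_range_self i)⟩
  let : Algebra (MvPolynomial ι S) F := toF.toRingHom.toAlgebra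
  have htoF : ∀ p, (algebraMap (MvPolynomial ι S) F p : T) = aeval x p := by
    suffices (IsScalarTower.toAlgHom S F T).comp toF = aeval x from fun p ↦ congr($this p)
    exact algHom_ext fun i ↦ by simp [toF]
  have : IsScalarTower (MvPolynomial ι S) F T := .of_algebraMap_eq fun p ↦ by
    rw [IntermediateField.algebraMap_apply, htoF, hx', IsScalarTower.coe_toAlgHom']
  have : IsFractionRing (MvPolynomial ι S) F := .of_algEquiv <|
    AlgEquiv.ofRingEquiv (f := hx.1.aevalEquivField.toRingEquiv) fun p ↦ Subtype.ext <| by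
      rw [AlgEquiv.coe_ringEquiv, hx.1.aevalEquivField_algebraMap_apply_coe, htoF]
  have : Algebra.FormallyEtale (MvPolynomial ι S) F := .of_isLocalization (nonZeroDivisors _)
  have : Algebra.FormallyEtale F T := .of_isSeparable F T
  exact .comp _ F T

theorem trdeg_eq_rank_kaehler_general
    (S : Type*) (T : Type u) [Field S] [Field T] [Algebra S T] [CharZero S]
    {ι : Type v} (x : ι → T) (hx : IsTranscendenceBasis S x) :
    Cardinal.lift.{u} (Cardinal.mk ι) = Cardinal.lift.{v} (Module.rank T (Ω[T⁄S])) := by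
  let : Algebra (MvPolynomial ι S) T := (aeval x).toRingHom.toAlgebra
  have : IsScalarTower S (MvPolynomial ι S) T := .of_algebraMap_eq' (aeval x).comp_algebraMap.symm
  have : Algebra.IsAlgebraic (IntermediateField.adjoin S (Set.range x)) T := hx.isAlgebraic_field
  have : CharZero (IntermediateField.adjoin S (Set.range x)) :=
    charZero_of_injective_algebraMap (algebraMap S _).injective
  have : Algebra.FormallyEtale (MvPolynomial ι S) T :=
    .mvPolynomial_of_isTranscendenceBasis hx (aeval_X x)
  exact KaehlerDifferential.lift_mk_eq_lift_rank_of_formallyEtale_mvPolynomial S T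

/-- For a finitely generated field extension `S ⊆ T` in characteristic zero, the
transcendence degree of `T` over `S` (the cardinality of any transcendence
basis) equals the dimension of the `T`-vector space `Ω[T⁄S]` of Kähler
differentials. -/
theorem trdeg_eq_rank_kaehler
    (S : Type*) (T : Type u) [Field S] [Field T] [Algebra S T] [CharZero S]
    (hfg : ∃ s : Finset T, IntermediateField.adjoin S (s : Set T) = ⊤)
    {ι : Type v} (x : ι → T) (hx : IsTranscendenceBasis S x) :
    Cardinal.lift.{u} (Cardinal.mk ι) = Cardinal.lift.{v} (Module.rank T (Ω[T⁄S])) :=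
  trdeg_eq_rank_kaehler_general S T x hx
end

section
/- Let k ⊆ K be a field extension with trdeg_k K = N, and let y_1, …, y_m ∈ K. If L is the subfield of K generated over k by all elements y_i^{(j)} for 0 ≤ j ≤ N obtained by applying a fixed derivation δ of K (with δ(k) ⊆ k) to the y_i, then each y_i^{(N+1)} := δ^{N+1}(y_i) is algebraic over L; in particular, the field generated by all δ^j(y_i) for all j ≥ 0 is an algebraic extension of L. -/
/-!
Among the `N + 1` elements `y, δy, …, δᴺy` of a field of transcendence degree `N` over `k`, some
`δʲy` is algebraic over `E = k(y, δy, …, δʲ⁻¹y)`. Then `δ` maps `E` into the algebraic closure of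
`E` in `K`, and a derivation with this property maps every element separable over `E` to an
element algebraic over `E`: differentiating `p(w) = 0` for the minimal polynomial `p` of `w` gives
`pᵟ(w) + p'(w) δw = 0`, where `pᵟ` has the coefficients of `p` differentiated and `p'(w) ≠ 0`.
In characteristic zero it follows inductively that every `δᵗy` is algebraic over `E ⊆ L`.
-/

open Set Polynomial IntermediateField

theorem Derivation.apply_mem_of_mem_closure {K : Type*} [Field K] (δ : Derivation ℤ K K)
    {A : Subfield K} {s : Set K} (hsA : s ⊆ A) (hs : ∀ x ∈ s, δ x ∈ A)
    {a : K} (ha : a ∈ Subfield.closure s) : δ a ∈ A := by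
  have hle : Subfield.closure s ≤ A := Subfield.closure_le.mpr hsA
  induction ha using Subfield.closure_induction with
  | mem x hx => exact hs x hx
  | one => simp
  | add x y _ _ hx hy => simpa using add_mem hx hy
  | neg x _ hx => simpa using neg_mem hx
  | mul x y hxs hys hx hy =>
    rw [Derivation.leibniz, smul_eq_mul, smul_eq_mul]
    exact add_mem (mul_mem (hle hxs) hy) (mul_mem (hle hys) hx)
  | inv x hxs hx =>
    rw [Derivation.leibniz_inv, smul_eq_mul, neg_mul]
    exact neg_mem (mul_mem (pow_mem (inv_mem (hle hxs)) 2) hx)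

theorem Derivation.isAlgebraic_apply_of_isSeparable {F K : Type*} [Field F] [Field K]
    [Algebra F K] (δ : Derivation ℤ K K) (hF : ∀ a : F, IsAlgebraic F (δ (algebraMap F K a)))
    {w : K} (hw : IsSeparable F w) : IsAlgebraic F (δ w) := by
  let A := algebraicClosure F K
  have hwA : w ∈ A := mem_algebraicClosure_iff.mpr hw.isIntegral.isAlgebraic
  have hcoeffs (p : F[X]) : (((δ.compAlgebraMap F).mapCoeffs p).map K .id).eval w ∈ A := by
    induction p using Polynomial.induction_on' with
    | add p q hp hq => simpa only [map_add] using add_mem hp hq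
    | monomial n a =>
      simp only [Derivation.mapCoeffs_monomial, PolynomialModule.map_single,
        PolynomialModule.eval_single, smul_eq_mul]
      exact mul_mem (pow_mem hwA n) (mem_algebraicClosure_iff.mpr (hF a))
  have hderiv : aeval w (derivative (minpoly F w)) ∈ A :=
    aeval_algebraMap_apply K (⟨w, hwA⟩ : A) (derivative (minpoly F w)) ▸ SetLike.coe_mem _
  have hne := hw.aeval_derivative_ne_zero (minpoly.aeval F w)
  have hδw : δ w = -(((δ.compAlgebraMap F).mapCoeffs (minpoly F w)).map K .id).eval w /
      aeval w (derivative (minpoly F w)) := by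
    have key := δ.apply_aeval_eq w (minpoly F w)
    rw [minpoly.aeval, map_zero, smul_eq_mul] at key
    rw [eq_div_iff hne]
    linear_combination -key
  rw [← mem_algebraicClosure_iff, hδw]
  exact div_mem (neg_mem (hcoeffs _)) hderiv

theorem algebraicIndepOn_Iio_of_transcendental {R A : Type*} [CommRing R] [CommRing A]
    [Algebra R A] (hinj : Function.Injective (algebraMap R A)) (z : ℕ → A) (n : ℕ)
    (h : ∀ j < n, Transcendental (Algebra.adjoin R (z '' Iio j)) (z j)) :
    AlgebraicIndepOn R z (Iio n) := by
  induction n with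
  | zero =>
    simpa [AlgebraicIndepOn] using
      (algebraicIndependent_empty_type_iff (x := fun i : (∅ : Set ℕ) ↦ z i)).mpr hinj
  | succ n ih =>
    rw [← Order.succ_eq_add_one, Order.Iio_succ_eq_insert]
    exact (ih fun j hj ↦ h j (by omega)).insert (h n (by omega))

theorem IsTranscendenceBasis.exists_le_isAlgebraic_adjoin_image_Iio {k K : Type*} [Field k]
    [Field K] [Algebra k K] {N : ℕ} {x : Fin N → K} (hx : IsTranscendenceBasis k x)
    (z : ℕ → K) : ∃ j ≤ N, IsAlgebraic (adjoin k (z '' Iio j)) (z j) := by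
  by_contra! h
  have hind : AlgebraicIndependent k fun i : Fin (N + 1) ↦ z i :=
    (algebraicIndepOn_Iio_of_transcendental (algebraMap k K).injective z (N + 1) fun j hj ↦
      transcendental_adjoin_iff.mp (h j (by omega))).comp
      (fun i : Fin (N + 1) ↦ (⟨i, i.2⟩ : Iio (N + 1)))
      fun i j hij ↦ Fin.ext (congrArg Subtype.val hij)
  have := hind.lift_cardinalMk_le_trdeg.trans_eq hx.lift_cardinalMk_eq_trdeg.symm
  simp at this

theorem isAlgebraic_iterate_of_isAlgebraic_adjoin_image_Iio {k K : Type*} [Field k] [Field K]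
    [Algebra k K] [CharZero k] (δ : Derivation ℤ K K)
    (hδk : ∀ a : k, IsAlgebraic k (δ (algebraMap k K a))) (y : K) {j : ℕ}
    (hj : IsAlgebraic (adjoin k ((δ^[·] y) '' Iio j)) (δ^[j] y)) (t : ℕ) :
    IsAlgebraic (adjoin k ((δ^[·] y) '' Iio j)) (δ^[t] y) := by
  set E := adjoin k ((δ^[·] y) '' Iio j)
  have : CharZero E := charZero_of_injective_algebraMap (algebraMap k E).injective
  have hsub (u : K) (hu : u ∈ E) : IsAlgebraic E u := isAlgebraic_algebraMap (⟨u, hu⟩ : E)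
  have hE (a : E) : IsAlgebraic E (δ a) := by
    rw [← mem_algebraicClosure_iff, ← mem_toSubfield]
    refine δ.apply_mem_of_mem_closure
      (fun u hu ↦ mem_algebraicClosure_iff.mpr (hsub u (Subfield.subset_closure hu))) ?_ a.2
    rintro _ (⟨a, rfl⟩ | ⟨s, hs, rfl⟩)
    · exact mem_algebraicClosure_iff.mpr ((hδk a).extendScalars (algebraMap k E).injective)
    · rw [← Function.iterate_succ_apply' (⇑δ) s y]
      rcases (Nat.succ_le_of_lt hs).lt_or_eq with hlt | rfl
      · exact mem_algebraicClosure_iff.mpr (hsub _ (subset_adjoin _ _ ⟨s + 1, hlt, rfl⟩))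
      · exact mem_algebraicClosure_iff.mpr hj
  induction t with
  | zero =>
    rcases j.eq_zero_or_pos with rfl | hj0
    · exact hj
    · exact hsub _ (subset_adjoin _ _ ⟨0, hj0, rfl⟩)
  | succ t ih =>
    rw [Function.iterate_succ_apply']
    exact δ.isAlgebraic_apply_of_isSeparable hE (minpoly.irreducible ih.isIntegral).separable

/-- Let `k ⊆ K` be a field extension of transcendence degree `N` (char 0), with a
derivation `δ` of `K` mapping `k` into itself, and `y₁, …, y_m ∈ K`.  Let `L` be
the subfield of `K` generated over `k` by the `δʲ(yᵢ)` for `j ≤ N`.  Then each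
`δ^(N+1)(yᵢ)` is algebraic over `L`; in particular every `δʲ(yᵢ)` (any `j ≥ 0`)
is algebraic over `L`. -/
theorem deriv_algebraic_over_low_order_field
    (k K : Type*) [Field k] [Field K] [Algebra k K] [CharZero k]
    (N : ℕ) (htr : ∃ x : Fin N → K, IsTranscendenceBasis k x)
    (δ : Derivation ℤ K K)
    (hδk : ∀ a : k, ∃ b : k, δ (algebraMap k K a) = algebraMap k K b)
    {m : ℕ} (y : Fin m → K)
    (L : IntermediateField k K)
    (hL : L = IntermediateField.adjoin k {z : K | ∃ i, ∃ j ≤ N, z = (⇑δ)^[j] (y i)}) :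
    (∀ i, IsAlgebraic L ((⇑δ)^[N + 1] (y i))) ∧
      ∀ i, ∀ j : ℕ, IsAlgebraic L ((⇑δ)^[j] (y i)) := by
  obtain ⟨x, hx⟩ := htr
  have hδk_alg (a : k) : IsAlgebraic k (δ (algebraMap k K a)) := by
    obtain ⟨b, hb⟩ := hδk a
    exact hb ▸ isAlgebraic_algebraMap b
  have key (i : Fin m) (t : ℕ) : IsAlgebraic L ((⇑δ)^[t] (y i)) := by
    obtain ⟨j, hjN, hj⟩ := hx.exists_le_isAlgebraic_adjoin_image_Iio (δ^[·] (y i))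
    have hle : adjoin k ((δ^[·] (y i)) '' Iio j) ≤ L := by
      rw [hL]
      exact adjoin.mono _ _ _ fun _ ⟨s, hs, hz⟩ ↦ ⟨i, s, hs.le.trans hjN, hz.symm⟩
    have hE := isAlgebraic_iterate_of_isAlgebraic_adjoin_image_Iio δ hδk_alg (y i) hj t
    exact hE.tower_top_of_subalgebra_le (B := L.toSubalgebra) hle
  exact ⟨fun i ↦ key i (N + 1), key⟩
end

section
/- Let q be the common denominator polynomial and v_0 the numerator of a rational function g = v_0/q in N variables, and let f_1, …, f_n be polynomials of degree ≤ d_0 and height ≤ h_0. Define the sequence v_{j+1} := Σ_i f_i (q ∂_i v_j − (2j+1) v_j ∂_i q). Then v_j / q^{2j+1} equals L^j g where L = (Σ f_i ∂_i)/q, and deg v_j ≤ (2j+1)d_0 − j when deg v_0, deg q ≤ d_0. -/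
/-!
On polynomials `L p = X p / q` with `X = Σ fᵢ ∂ᵢ`, so the quotient rule gives
`L (v / q ^ n) = (q X v - n v X q) / q ^ (n + 2)`; with `n = 2j + 1` the numerator is `v_{j+1}`.
Since `∂ᵢ` lowers the degree by one, each step raises it by at most `2 d₀ - 1`.
-/

open MvPolynomial

def Derivation.ofAddMul {A : Type*} [CommRing A] (L : A → A)
    (hadd : ∀ x y, L (x + y) = L x + L y) (hmul : ∀ x y, L (x * y) = L x * y + x * L y) :
    Derivation ℤ A A :=
  Derivation.mk' (AddMonoidHom.mk' L hadd).toIntLinearMap fun a b => by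
    simp only [AddMonoidHom.coe_toIntLinearMap, AddMonoidHom.mk'_apply, hmul, smul_eq_mul]
    ring

theorem map_div_pow_of_leibniz {K : Type*} [Field K] {L : K → K}
    (hadd : ∀ x y, L (x + y) = L x + L y) (hmul : ∀ x y, L (x * y) = L x * y + x * L y)
    {a Q α β : K} (ha : L a = α / Q) (hQ : L Q = β / Q) (n : ℕ) :
    L (a / Q ^ n) = (Q * α - n * a * β) / Q ^ (n + 2) := by
  let D := Derivation.ofAddMul L hadd hmul
  change D (a / Q ^ n) = _
  change D a = _ at ha
  change D Q = _ at hQ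
  rcases eq_or_ne Q 0 with rfl | hQ0
  · rcases n with _ | n <;> simp_all
  · rw [D.leibniz_div, D.leibniz_pow, ha, hQ]
    simp only [smul_eq_mul, nsmul_eq_mul]
    rcases n with _ | n <;> field_simp <;> push_cast <;> ring

theorem Finset.sum_mul_sub_mul {ι R : Type*} [CommRing R] (s : Finset ι) (f g h : ι → R)
    (a b : R) :
    ∑ i ∈ s, f i * (a * g i - b * h i) = a * ∑ i ∈ s, f i * g i - b * ∑ i ∈ s, f i * h i := by
  simp only [Finset.mul_sum, ← Finset.sum_sub_distrib]
  exact Finset.sum_congr rfl fun i _ => by ring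

namespace MvPolynomial

variable {σ R : Type*}

theorem totalDegree_pderiv_le [CommSemiring R] (i : σ) (p : MvPolynomial σ R) :
    (pderiv i p).totalDegree ≤ p.totalDegree - 1 := by
  conv_lhs => rw [p.as_sum, map_sum]
  refine (totalDegree_finsetSum _ _).trans (Finset.sup_le fun m hm => ?_)
  rw [pderiv_monomial]
  rcases eq_or_ne (m i) 0 with hmi | hmi
  · simp [hmi]
  refine (totalDegree_monomial_le _ _).trans ?_
  have hle : Finsupp.single i 1 ≤ m := Finsupp.single_le_iff.mpr (Nat.one_le_iff_ne_zero.mpr hmi)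
  have hdeg : (m - Finsupp.single i 1).degree + 1 = m.degree := by
    conv_rhs => rw [← tsub_add_cancel_of_le hle]
    rw [map_add, Finsupp.degree_single]
  have hmp : m.degree ≤ p.totalDegree := le_totalDegree hm
  change (m - Finsupp.single i 1).degree ≤ _
  omega

theorem totalDegree_pderiv_mul_le [CommSemiring R] (i : σ) (p r : MvPolynomial σ R) :
    (pderiv i p * r).totalDegree ≤ p.totalDegree + r.totalDegree - 1 := by
  rcases eq_or_ne p.totalDegree 0 with hp | hp
  · rw [totalDegree_eq_zero_iff_eq_C.mp hp, pderiv_C, zero_mul, totalDegree_zero]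
    exact Nat.zero_le _
  · have hdp := totalDegree_pderiv_le i p
    exact (totalDegree_mul _ _).trans (by omega)

theorem totalDegree_sum_mul_pderiv_sub_le [CommRing R] [Fintype σ] {f : σ → MvPolynomial σ R}
    {q : MvPolynomial σ R} {d : ℕ} (hf : ∀ i, (f i).totalDegree ≤ d) (hq : q.totalDegree ≤ d)
    (c : ℕ) (v : MvPolynomial σ R) :
    (∑ i, f i * (q * pderiv i v - (c : MvPolynomial σ R) * v * pderiv i q)).totalDegree ≤
      2 * d + v.totalDegree - 1 := by
  refine (totalDegree_finsetSum _ _).trans (Finset.sup_le fun i _ => ?_)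
  have hcv : ((c : MvPolynomial σ R) * v).totalDegree ≤ v.totalDegree :=
    (totalDegree_mul _ _).trans (by rw [← C_eq_coe_nat, totalDegree_C, zero_add])
  have hvq := totalDegree_pderiv_mul_le i v q
  have hqcv := totalDegree_pderiv_mul_le i q ((c : MvPolynomial σ R) * v)
  have hsub := totalDegree_sub (pderiv i v * q) (pderiv i q * (c * v))
  have hfi := hf i
  rw [mul_comm q, mul_comm _ (pderiv i q)]
  refine (totalDegree_mul _ _).trans ?_
  omega

end MvPolynomial

theorem Nat.le_mul_sub_of_le_two_mul_add_sub_one {D : ℕ → ℕ} {d : ℕ} (h₀ : D 0 ≤ d)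
    (hs : ∀ j, D (j + 1) ≤ 2 * d + D j - 1) (j : ℕ) : D j ≤ (2 * j + 1) * d - j := by
  induction j with
  | zero => simpa using h₀
  | succ j ih =>
    refine (hs j).trans ?_
    rcases Nat.eq_zero_or_pos d with rfl | hd
    · simp at ih ⊢
      omega
    · have hjd : j + 1 ≤ (2 * j + 1) * d := (by omega : j + 1 ≤ 2 * j + 1).trans
        (Nat.le_mul_of_pos_right _ hd)
      have hexp : (2 * (j + 1) + 1) * d = (2 * j + 1) * d + 2 * d := by ring
      omega

theorem numerator_recurrence_lie_derivative_general
    (N : ℕ) (q v₀ : MvPolynomial (Fin N) ℤ)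
    (f : Fin N → MvPolynomial (Fin N) ℤ) (d₀ : ℕ)
    (hf : ∀ i, (f i).totalDegree ≤ d₀)
    (v : ℕ → MvPolynomial (Fin N) ℤ)
    (hv0 : v 0 = v₀)
    (hvrec : ∀ j, v (j + 1) =
      ∑ i, f i * (q * pderiv i (v j) -
        ((2 * j + 1 : ℕ) : MvPolynomial (Fin N) ℤ) * v j * pderiv i q))
    (L : FractionRing (MvPolynomial (Fin N) ℤ) → FractionRing (MvPolynomial (Fin N) ℤ))
    (hLadd : ∀ x y, L (x + y) = L x + L y)
    (hLmul : ∀ x y, L (x * y) = L x * y + x * L y)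
    (hLpoly : ∀ p : MvPolynomial (Fin N) ℤ,
      L (algebraMap _ (FractionRing (MvPolynomial (Fin N) ℤ)) p) =
        algebraMap _ _ (∑ i, f i * pderiv i p) / algebraMap _ _ q) :
    ∀ j : ℕ,
      L^[j] (algebraMap _ (FractionRing (MvPolynomial (Fin N) ℤ)) v₀ /
          algebraMap _ _ q) =
        algebraMap _ _ (v j) / (algebraMap _ _ q) ^ (2 * j + 1) ∧
      (v₀.totalDegree ≤ d₀ → q.totalDegree ≤ d₀ →
        (v j).totalDegree ≤ (2 * j + 1) * d₀ - j) := by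
  intro j
  refine ⟨?_, fun hv₀ hq => ?_⟩
  · induction j with
    | zero => simp [hv0]
    | succ j ih =>
      rw [Function.iterate_succ_apply', ih, hvrec, Finset.sum_mul_sub_mul]
      convert map_div_pow_of_leibniz hLadd hLmul (hLpoly (v j)) (hLpoly q) (2 * j + 1) using 1
      simp only [map_sub, map_mul, map_natCast]
      ring_nf
  · refine Nat.le_mul_sub_of_le_two_mul_add_sub_one (D := fun j => (v j).totalDegree)
      (by rwa [hv0]) (fun j => ?_) j
    rw [hvrec]
    exact totalDegree_sum_mul_pderiv_sub_le hf hq _ _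

/-- Let `g = v₀/q` be a rational function in `N` variables over `ℤ`, let
`f₁, …, f_N` be polynomials of total degree at most `d₀`, and let `L` be the
derivation `(Σ fᵢ ∂ᵢ)/q` acting on rational functions.  Define
`v_{j+1} := Σᵢ fᵢ (q ∂ᵢ v_j − (2j+1) v_j ∂ᵢ q)`.  Then `Lʲ g = v_j / q^(2j+1)`,
and if moreover `deg v₀ ≤ d₀` and `deg q ≤ d₀` then `deg v_j ≤ (2j+1)d₀ − j`. -/
theorem numerator_recurrence_lie_derivative
    (N : ℕ) (q v₀ : MvPolynomial (Fin N) ℤ) (hq : q ≠ 0)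
    (f : Fin N → MvPolynomial (Fin N) ℤ) (d₀ : ℕ)
    (hf : ∀ i, (f i).totalDegree ≤ d₀)
    (v : ℕ → MvPolynomial (Fin N) ℤ)
    (hv0 : v 0 = v₀)
    (hvrec : ∀ j, v (j + 1) =
      ∑ i, f i * (q * pderiv i (v j) -
        ((2 * j + 1 : ℕ) : MvPolynomial (Fin N) ℤ) * v j * pderiv i q))
    (L : FractionRing (MvPolynomial (Fin N) ℤ) → FractionRing (MvPolynomial (Fin N) ℤ))
    (hLadd : ∀ x y, L (x + y) = L x + L y)
    (hLmul : ∀ x y, L (x * y) = L x * y + x * L y)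
    (hLpoly : ∀ p : MvPolynomial (Fin N) ℤ,
      L (algebraMap _ (FractionRing (MvPolynomial (Fin N) ℤ)) p) =
        algebraMap _ _ (∑ i, f i * pderiv i p) / algebraMap _ _ q) :
    ∀ j : ℕ,
      L^[j] (algebraMap _ (FractionRing (MvPolynomial (Fin N) ℤ)) v₀ /
          algebraMap _ _ q) =
        algebraMap _ _ (v j) / (algebraMap _ _ q) ^ (2 * j + 1) ∧
      (v₀.totalDegree ≤ d₀ → q.totalDegree ≤ d₀ →
        (v j).totalDegree ≤ (2 * j + 1) * d₀ - j) :=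
  numerator_recurrence_lie_derivative_general N q v₀ f d₀ hf v hv0 hvrec L hLadd hLmul hLpoly
end
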